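/- arXiv:2210.11393 — 3 statements merged into one kernel-verified Lean document; each statement's English description precedes it below -/
import Mathlib

section
/- Let ζ(θ) = diag(cos²θ, ½sin²θ, ½sin²θ), a classically mixed differentiable state family on ℂ³, and let M₁ = diag(1, ½, 0), M₂ = diag(0, ½, 1), a commuting-operator measurement on ℂ³ with two outcomes. Then at θ₀ = π/4: F^P(ζ₀, ζ₀', {M₁, M₂}) = 4 and F^U(ζ₀, ζ₀', {M₁, M₂}) < 4. Hence there exist a classically mixed state family and a commuting-operator measurement for which the unitary-preprocessing-optimized Fisher information is strictly smaller than the preprocessing-optimized Fisher information. -/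
open scoped Matrix Kronecker ComplexOrder
open Classical

noncomputable section

/-- A density matrix: positive semidefinite with unit trace. -/
def IsDensityMatrix {n : Type*} [Fintype n] (ρ : Matrix n n ℂ) : Prop :=
  ρ.PosSemidef ∧ ρ.trace = 1

/-- A POVM with `r` outcomes. -/
def IsPOVM {n : Type*} [Fintype n] [DecidableEq n] {r : ℕ}
    (M : Fin r → Matrix n n ℂ) : Prop :=
  (∀ i, (M i).PosSemidef) ∧ ∑ i, M i = 1

/-- The Fisher information of the measurement-outcome distribution. -/
def FisherInfo {n : Type*} [Fintype n] {r : ℕ}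
    (ρ ρ' : Matrix n n ℂ) (M : Fin r → Matrix n n ℂ) : ℝ :=
  ∑ i, if (ρ * M i).trace = 0 then 0
    else ((ρ' * M i).trace.re) ^ 2 / ((ρ * M i).trace.re)

/-- A quantum channel (CPTP map) given by finitely many Kraus operators. -/
def IsQuantumChannel {m n : Type*} [Fintype m] [Fintype n] [DecidableEq m]
    (E : Matrix m m ℂ → Matrix n n ℂ) : Prop :=
  ∃ (κ : ℕ) (K : Fin κ → Matrix n m ℂ),
    (∑ j, (K j)ᴴ * K j = 1) ∧ ∀ σ, E σ = ∑ j, K j * σ * (K j)ᴴ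

/-- Quantum preprocessing-optimized Fisher information. -/
def QPFI {m n : Type*} [Fintype m] [Fintype n] [DecidableEq m] {r : ℕ}
    (ρ ρ' : Matrix m m ℂ) (M : Fin r → Matrix n n ℂ) : ℝ :=
  sSup {x : ℝ | ∃ E : Matrix m m ℂ → Matrix n n ℂ,
    IsQuantumChannel E ∧ x = FisherInfo (E ρ) (E ρ') M}

/-- Quantum unitary-preprocessing-optimized Fisher information. -/
def QUPFI {n : Type*} [Fintype n] [DecidableEq n] {r : ℕ}
    (ρ ρ' : Matrix n n ℂ) (M : Fin r → Matrix n n ℂ) : ℝ :=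
  sSup {x : ℝ | ∃ U : Matrix n n ℂ, U ∈ Matrix.unitaryGroup n ℂ ∧
    x = FisherInfo (U * ρ * Uᴴ) (U * ρ' * Uᴴ) M}

/-- Complex inner product, conjugate-linear in the first argument. -/
def cInner {n : Type*} [Fintype n] (φ ψ : n → ℂ) : ℂ := ∑ k, star (φ k) * ψ k

/-- The functional whose supremum over orthonormal pairs is the normalized QPFI. -/
def gammaSummand {n : Type*} [Fintype n] {r : ℕ}
    (M : Fin r → Matrix n n ℂ) (φ φp : n → ℂ) : ℝ :=
  ∑ i, if cInner φ (M i *ᵥ φ) = 0 then 0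
    else ((cInner φ (M i *ᵥ φp)).re) ^ 2 / ((cInner φ (M i *ᵥ φ)).re)

/-- The normalized QPFI of a POVM. -/
def gammaPOVM {n : Type*} [Fintype n] {r : ℕ} (M : Fin r → Matrix n n ℂ) : ℝ :=
  sSup {x : ℝ | ∃ φ φp : n → ℂ,
    cInner φ φ = 1 ∧ cInner φp φp = 1 ∧ cInner φ φp = 0 ∧ x = gammaSummand M φ φp}

/-- Quantum Fisher information: the Fisher information optimized over all POVMs. -/
def QFI {m : Type*} [Fintype m] [DecidableEq m] (ρ ρ' : Matrix m m ℂ) : ℝ :=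
  sSup {x : ℝ | ∃ (κ : ℕ) (T : Fin κ → Matrix m m ℂ), IsPOVM T ∧ x = FisherInfo ρ ρ' T}

/-- Classical Fisher information of a finite probability distribution. -/
def classFisher {r : ℕ} (p p' : Fin r → ℝ) : ℝ :=
  ∑ i, if p i = 0 then 0 else (p' i) ^ 2 / p i


/-! Sending the basis state `k` through a channel and then measuring gives outcome `i` with a
probability `w i k` (`outcomeProb`), so the Fisher information of any preprocessed diagonal family
is the classical Fisher information of `p = w λ₀`, `q = w λ₀'`. At `θ₀ = π/4` we have
`λ₀ = (1/2, 1/4, 1/4)` and `λ₀' = (-1, 1/2, 1/2)`, hence `|λ₀'| ≤ 2 λ₀`, so `|q| ≤ 2 p` and the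
Fisher information is at most `4`; the channel sending levels `1` and `2` to level `2` attains it.
For a unitary `U` the weights `w i k = (U† Mᵢ U)ₖₖ` also satisfy `∑ₖ w 0 k = Tr M₀ = 3/2`, which
keeps both outcome probabilities at least `3/8` and `|q|` at most `3/4`, so the Fisher information
is at most `2 · (9/16) / (3/8) = 3`. -/

open Matrix

section Kraus

variable {m n : Type*} [Fintype n] {κ r : ℕ}

def krausDual (K : Fin κ → Matrix n m ℂ) (A : Matrix n n ℂ) : Matrix m m ℂ :=
  ∑ j, (K j)ᴴ * A * K j

lemma trace_kraus_mul [Fintype m] (K : Fin κ → Matrix n m ℂ) (σ : Matrix m m ℂ)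
    (A : Matrix n n ℂ) :
    ((∑ j, K j * σ * (K j)ᴴ) * A).trace = (σ * krausDual K A).trace := by
  simp only [krausDual, Finset.sum_mul, Finset.mul_sum, trace_sum]
  refine Finset.sum_congr rfl fun j _ => ?_
  rw [Matrix.mul_assoc, Matrix.mul_assoc, trace_mul_comm, Matrix.mul_assoc]

lemma krausDual_posSemidef [Finite m] (K : Fin κ → Matrix n m ℂ) {A : Matrix n n ℂ}
    (hA : A.PosSemidef) : (krausDual K A).PosSemidef :=
  posSemidef_sum _ fun j _ => hA.conjTranspose_mul_mul_same (K j)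

lemma sum_krausDual (K : Fin κ → Matrix n m ℂ) (A : Fin r → Matrix n n ℂ) :
    ∑ i, krausDual K (A i) = krausDual K (∑ i, A i) := by
  simp only [krausDual, Matrix.mul_sum, Matrix.sum_mul]
  exact Finset.sum_comm

lemma krausDual_one [DecidableEq m] [DecidableEq n] {K : Fin κ → Matrix n m ℂ}
    (hK : ∑ j, (K j)ᴴ * K j = 1) : krausDual K 1 = 1 := by
  simpa only [krausDual, Matrix.mul_one] using hK

/-- The probability of outcome `i` when the basis state `k` is sent through the channel with
Kraus operators `K` and then measured with `M`. -/
def outcomeProb (K : Fin κ → Matrix n m ℂ) (M : Fin r → Matrix n n ℂ) (i : Fin r) (k : m) : ℝ :=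
  (krausDual K (M i) k k).re

variable {K : Fin κ → Matrix n m ℂ} {M : Fin r → Matrix n n ℂ}

lemma krausDual_apply_self_eq_outcomeProb [Finite m] [DecidableEq n] (hM : IsPOVM M)
    (i : Fin r) (k : m) : krausDual K (M i) k k = outcomeProb K M i k :=
  Complex.eq_re_of_ofReal_le (r := 0) <| by
    simpa using (krausDual_posSemidef K (hM.1 i)).diag_nonneg

lemma outcomeProb_nonneg [Finite m] [DecidableEq n] (hM : IsPOVM M) (i : Fin r) (k : m) :
    0 ≤ outcomeProb K M i k :=
  (Complex.nonneg_iff.1 (krausDual_posSemidef K (hM.1 i)).diag_nonneg).1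

lemma sum_outcomeProb [DecidableEq m] [DecidableEq n] (hK : ∑ j, (K j)ᴴ * K j = 1)
    (hM : IsPOVM M) (k : m) : ∑ i, outcomeProb K M i k = 1 := by
  have h := congrArg (fun A : Matrix m m ℂ => (A k k).re) (sum_krausDual K M)
  simpa [hM.2, krausDual_one hK, Matrix.sum_apply, outcomeProb] using h

lemma trace_kraus_diagonal_mul [Fintype m] [DecidableEq m] [DecidableEq n] (hM : IsPOVM M)
    (d : m → ℝ) (i : Fin r) :
    ((∑ j, K j * diagonal (fun k => (d k : ℂ)) * (K j)ᴴ) * M i).trace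
      = ((∑ k, outcomeProb K M i k * d k : ℝ) : ℂ) := by
  rw [trace_kraus_mul]
  simp only [trace, diag, diagonal_mul, krausDual_apply_self_eq_outcomeProb hM]
  push_cast
  exact Finset.sum_congr rfl fun k _ => mul_comm _ _

lemma fisherInfo_eq_classFisher {ρ ρ' : Matrix n n ℂ} {p q : Fin r → ℝ}
    (hp : ∀ i, (ρ * M i).trace = p i) (hq : ∀ i, (ρ' * M i).trace = q i) :
    FisherInfo ρ ρ' M = classFisher p q := by
  simp [FisherInfo, classFisher, hp, hq]

lemma fisherInfo_kraus_diagonal [Fintype m] [DecidableEq m] [DecidableEq n] (hM : IsPOVM M)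
    (d d' : m → ℝ) :
    FisherInfo (∑ j, K j * diagonal (fun k => (d k : ℂ)) * (K j)ᴴ)
      (∑ j, K j * diagonal (fun k => (d' k : ℂ)) * (K j)ᴴ) M
      = classFisher (fun i => ∑ k, outcomeProb K M i k * d k)
          (fun i => ∑ k, outcomeProb K M i k * d' k) :=
  fisherInfo_eq_classFisher (trace_kraus_diagonal_mul hM d) (trace_kraus_diagonal_mul hM d')

def relabelKraus [DecidableEq n] (g : Fin κ → n) (j : Fin κ) : Matrix n (Fin κ) ℂ :=
  single (g j) j 1

lemma sum_relabelKraus [DecidableEq n] (g : Fin κ → n) :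
    ∑ j, (relabelKraus g j)ᴴ * relabelKraus g j = 1 := by
  simp [relabelKraus, conjTranspose_single, single_mul_single_same, sum_single_one]

lemma outcomeProb_relabelKraus [DecidableEq n] (g : Fin κ → n) (i : Fin r) (k : Fin κ) :
    outcomeProb (relabelKraus g) M i k = (M i (g k) (g k)).re := by
  simp [outcomeProb, krausDual, relabelKraus, Matrix.sum_apply, single_apply]

lemma sum_outcomeProb_unitary [DecidableEq n] {U : Matrix n n ℂ} (hU : U ∈ unitaryGroup n ℂ)
    (i : Fin r) : ∑ k, outcomeProb (fun _ : Fin 1 => U) M i k = (M i).trace.re := by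
  have hUU : U * Uᴴ = 1 := mem_unitaryGroup_iff.1 hU
  simp only [outcomeProb, krausDual, Finset.univ_unique, Finset.sum_singleton, ← Complex.re_sum]
  change (Uᴴ * M i * U).trace.re = _
  rw [trace_mul_cycle, hUU, Matrix.one_mul]

end Kraus

section ClassicalFisher

variable {r : ℕ} {p q : Fin r → ℝ}

lemma classFisher_le_of_abs_le {c : ℝ} (hp : ∀ i, 0 ≤ p i) (h : ∀ i, |q i| ≤ c * p i) :
    classFisher p q ≤ c ^ 2 * ∑ i, p i := by
  rw [classFisher, Finset.mul_sum]
  refine Finset.sum_le_sum fun i _ => ?_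
  split_ifs with hpi
  · simp [hpi]
  · have hpos : 0 < p i := (hp i).lt_of_ne' hpi
    rw [div_le_iff₀ hpos, ← sq_abs]
    nlinarith [abs_nonneg (q i), h i]

lemma classFisher_le_of_le {a b : ℝ} (ha : 0 < a) (hp : ∀ i, a ≤ p i) (hq : ∀ i, q i ^ 2 ≤ b) :
    classFisher p q ≤ r * (b / a) := by
  refine (Finset.sum_le_sum (g := fun _ => b / a) fun i _ => ?_).trans_eq (by simp)
  rw [if_neg (ha.trans_le (hp i)).ne']
  exact div_le_div₀ ((sq_nonneg _).trans (hq i)) (hq i) ha (hp i)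

end ClassicalFisher

lemma fisherInfo_kraus_diagonal_le {m n : Type*} [Fintype m] [Fintype n] [DecidableEq m]
    [DecidableEq n] {κ r : ℕ} {K : Fin κ → Matrix n m ℂ} {M : Fin r → Matrix n n ℂ}
    (hK : ∑ j, (K j)ᴴ * K j = 1) (hM : IsPOVM M) {d d' : m → ℝ} {c : ℝ}
    (hd : ∀ k, 0 ≤ d k) (hd' : ∀ k, |d' k| ≤ c * d k) :
    FisherInfo (∑ j, K j * diagonal (fun k => (d k : ℂ)) * (K j)ᴴ)
      (∑ j, K j * diagonal (fun k => (d' k : ℂ)) * (K j)ᴴ) M ≤ c ^ 2 * ∑ k, d k := by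
  rw [fisherInfo_kraus_diagonal hM]
  have hw := outcomeProb_nonneg (K := K) hM
  refine (classFisher_le_of_abs_le (c := c)
    (fun i => Finset.sum_nonneg fun k _ => mul_nonneg (hw i k) (hd k)) fun i => ?_).trans_eq ?_
  · calc |∑ k, outcomeProb K M i k * d' k|
        ≤ ∑ k, outcomeProb K M i k * |d' k| := by
          refine (Finset.abs_sum_le_sum_abs _ _).trans_eq ?_
          simp only [abs_mul, abs_of_nonneg (hw i _)]
      _ ≤ ∑ k, outcomeProb K M i k * (c * d k) :=
          Finset.sum_le_sum fun k _ => mul_le_mul_of_nonneg_left (hd' k) (hw i k)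
      _ = c * ∑ k, outcomeProb K M i k * d k := by
          rw [Finset.mul_sum]
          exact Finset.sum_congr rfl fun k _ => by ring
  · rw [Finset.sum_comm]
    simp only [← Finset.sum_mul, sum_outcomeProb hK hM, one_mul]

lemma eq_diagonal_of_hasDerivAt {n : Type*} [DecidableEq n] {f : ℝ → n → ℝ} {f' : n → ℝ}
    {θ₀ : ℝ} {ζ' : Matrix n n ℂ} (hf : ∀ k, HasDerivAt (fun θ => f θ k) (f' k) θ₀)
    (hζ' : ∀ i j, HasDerivAt (fun θ => diagonal (fun k => (f θ k : ℂ)) i j) (ζ' i j) θ₀) :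
    ζ' = diagonal (fun k => (f' k : ℂ)) := by
  ext i j
  refine (hζ' i j).unique ?_
  by_cases h : i = j
  · subst h
    simpa using (hf i).ofReal_comp
  · simpa [diagonal_apply_ne _ h] using hasDerivAt_const θ₀ (0 : ℂ)

section Example

open Real

def eigs (θ : ℝ) : Fin 3 → ℝ := ![cos θ ^ 2, sin θ ^ 2 / 2, sin θ ^ 2 / 2]

def lam₀ : Fin 3 → ℝ := ![1 / 2, 1 / 4, 1 / 4]

def lam₀' : Fin 3 → ℝ := ![-1, 1 / 2, 1 / 2]

lemma eigs_pi_div_four : eigs (π / 4) = lam₀ := by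
  have h : √2 ^ 2 = 2 := sq_sqrt zero_le_two
  ext k
  fin_cases k <;> norm_num [eigs, lam₀, cos_pi_div_four, sin_pi_div_four, div_pow, h]

lemma hasDerivAt_eigs (k : Fin 3) : HasDerivAt (fun θ => eigs θ k) (lam₀' k) (π / 4) := by
  have h : √2 * √2 = 2 := mul_self_sqrt zero_le_two
  fin_cases k
  · refine ((hasDerivAt_cos _).fun_pow 2).congr_deriv ?_
    norm_num [lam₀', cos_pi_div_four, sin_pi_div_four]
    nlinarith
  all_goals
    refine (((hasDerivAt_sin _).fun_pow 2).div_const 2).congr_deriv ?_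
    norm_num [lam₀', cos_pi_div_four, sin_pi_div_four]
    nlinarith

lemma abs_lam₀'_le (k : Fin 3) : |lam₀' k| ≤ 2 * lam₀ k := by
  fin_cases k <;> norm_num [lam₀, lam₀']

lemma fisherInfo_kraus_lam₀_le_four {r κ : ℕ} {M : Fin r → Matrix (Fin 3) (Fin 3) ℂ}
    {K : Fin κ → Matrix (Fin 3) (Fin 3) ℂ} (hK : ∑ j, (K j)ᴴ * K j = 1) (hM : IsPOVM M) :
    FisherInfo (∑ j, K j * diagonal (fun k => (lam₀ k : ℂ)) * (K j)ᴴ)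
      (∑ j, K j * diagonal (fun k => (lam₀' k : ℂ)) * (K j)ᴴ) M ≤ 4 :=
  (fisherInfo_kraus_diagonal_le hK hM (fun k => by fin_cases k <;> norm_num [lam₀])
    abs_lam₀'_le).trans_eq (by norm_num [lam₀, Fin.sum_univ_three, cons_val_two])

lemma classFisher_lam₀_le_three {w : Fin 2 → Fin 3 → ℝ} (hw : ∀ i k, 0 ≤ w i k)
    (hw1 : ∀ k, w 0 k + w 1 k = 1) (htr : ∑ k, w 0 k = 3 / 2) :
    classFisher (fun i => ∑ k, w i k * lam₀ k) (fun i => ∑ k, w i k * lam₀' k) ≤ 3 := by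
  simp only [Fin.sum_univ_three] at htr
  -- By `htr` and `hw1`, both outcome distributions depend only on `w 0 0 ∈ [0, 1]`.
  have hx : w 0 0 ≤ 1 := by linarith [hw1 0, hw 1 0]
  have hp : ∀ i, 3 / 8 ≤ ∑ k, w i k * lam₀ k := by
    intro i
    fin_cases i <;>
      simp only [Fin.zero_eta, Fin.mk_one, Fin.sum_univ_three, lam₀, cons_val_zero, cons_val_one,
        cons_val_two, tail_cons, head_cons] <;> linarith [hw1 0, hw1 1, hw1 2, hw 0 0]
  have hq : ∀ i, |∑ k, w i k * lam₀' k| ≤ 3 / 4 := by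
    intro i
    fin_cases i <;>
      simp only [Fin.zero_eta, Fin.mk_one, Fin.sum_univ_three, lam₀', cons_val_zero, cons_val_one,
        cons_val_two, tail_cons, head_cons, abs_le] <;>
      constructor <;> linarith [hw1 0, hw1 1, hw1 2, hw 0 0]
  refine (classFisher_le_of_le (a := 3 / 8) (b := 9 / 16) (by norm_num) hp fun i => ?_).trans_eq
    (by norm_num)
  nlinarith [sq_abs (∑ k, w i k * lam₀' k), abs_nonneg (∑ k, w i k * lam₀' k), hq i]

lemma fisherInfo_unitary_lam₀_le_three {M : Fin 2 → Matrix (Fin 3) (Fin 3) ℂ}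
    {U : Matrix (Fin 3) (Fin 3) ℂ} (hU : U ∈ unitaryGroup (Fin 3) ℂ) (hM : IsPOVM M)
    (htr : (M 0).trace.re = 3 / 2) :
    FisherInfo (U * diagonal (fun k => (lam₀ k : ℂ)) * Uᴴ)
      (U * diagonal (fun k => (lam₀' k : ℂ)) * Uᴴ) M ≤ 3 := by
  have hUU : Uᴴ * U = 1 := mem_unitaryGroup_iff'.1 hU
  have hK : ∑ _ : Fin 1, Uᴴ * U = 1 := by simpa using hUU
  have h := fisherInfo_kraus_diagonal (K := fun _ : Fin 1 => U) hM lam₀ lam₀'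
  simp only [Finset.univ_unique, Finset.sum_singleton] at h
  rw [h]
  exact classFisher_lam₀_le_three (outcomeProb_nonneg hM)
    (fun k => by simpa [Fin.sum_univ_two] using sum_outcomeProb hK hM k)
    (by rw [sum_outcomeProb_unitary hU, htr])

variable {M : Fin 2 → Matrix (Fin 3) (Fin 3) ℂ}

lemma isPOVM_of_eq_diagonal (hM0 : M 0 = diagonal ![(1 : ℂ), (1 / 2 : ℂ), (0 : ℂ)])
    (hM1 : M 1 = diagonal ![(0 : ℂ), (1 / 2 : ℂ), (1 : ℂ)]) : IsPOVM M := by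
  refine ⟨fun i => ?_, ?_⟩
  · fin_cases i <;> simp only [Fin.zero_eta, Fin.mk_one, hM0, hM1] <;>
      exact posSemidef_diagonal_iff.2 fun k => by fin_cases k <;> norm_num [Complex.nonneg_iff]
  · rw [Fin.sum_univ_two, hM0, hM1, diagonal_add, ← diagonal_one]
    congr 1
    funext k
    fin_cases k <;> norm_num

lemma fisherInfo_relabelKraus_lam₀_eq_four (hM : IsPOVM M)
    (hM0 : M 0 = diagonal ![(1 : ℂ), (1 / 2 : ℂ), (0 : ℂ)])
    (hM1 : M 1 = diagonal ![(0 : ℂ), (1 / 2 : ℂ), (1 : ℂ)]) :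
    FisherInfo (∑ j, relabelKraus ![0, 2, 2] j * diagonal (fun k => (lam₀ k : ℂ)) *
        (relabelKraus ![0, 2, 2] j)ᴴ)
      (∑ j, relabelKraus ![0, 2, 2] j * diagonal (fun k => (lam₀' k : ℂ)) *
        (relabelKraus ![0, 2, 2] j)ᴴ) M = 4 := by
  rw [fisherInfo_kraus_diagonal hM]
  norm_num [classFisher, outcomeProb_relabelKraus, hM0, hM1, lam₀, lam₀', Fin.sum_univ_three,
    cons_val_two]

lemma qpfi_lam₀_eq_four (hM : IsPOVM M)
    (hM0 : M 0 = diagonal ![(1 : ℂ), (1 / 2 : ℂ), (0 : ℂ)])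
    (hM1 : M 1 = diagonal ![(0 : ℂ), (1 / 2 : ℂ), (1 : ℂ)]) :
    QPFI (diagonal fun k => (lam₀ k : ℂ)) (diagonal fun k => (lam₀' k : ℂ)) M = 4 := by
  have hle : ∀ x ∈ {x | ∃ E : Matrix (Fin 3) (Fin 3) ℂ → Matrix (Fin 3) (Fin 3) ℂ,
      IsQuantumChannel E ∧ x = FisherInfo (E (diagonal fun k => (lam₀ k : ℂ)))
        (E (diagonal fun k => (lam₀' k : ℂ))) M}, x ≤ 4 := by
    rintro _ ⟨E, ⟨κ, K, hK, hE⟩, rfl⟩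
    rw [hE, hE]
    exact fisherInfo_kraus_lam₀_le_four hK hM
  refine le_antisymm (Real.sSup_le hle (by norm_num)) (le_csSup ⟨4, hle⟩ ?_)
  exact ⟨_, ⟨3, relabelKraus ![0, 2, 2], sum_relabelKraus _, fun _ => rfl⟩,
    (fisherInfo_relabelKraus_lam₀_eq_four hM hM0 hM1).symm⟩

lemma qupfi_lam₀_lt_four (hM : IsPOVM M) (htr : (M 0).trace.re = 3 / 2) :
    QUPFI (diagonal fun k => (lam₀ k : ℂ)) (diagonal fun k => (lam₀' k : ℂ)) M < 4 := by
  refine (Real.sSup_le ?_ zero_le_three).trans_lt (by norm_num)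
  rintro _ ⟨U, hU, rfl⟩
  exact fisherInfo_unitary_lam₀_le_three hU hM htr

end Example

/-- the explicit three-level example with
`ζ(θ) = diag(cos²θ, ½sin²θ, ½sin²θ)` and the two-outcome commuting measurement
`M₁ = diag(1, ½, 0)`, `M₂ = diag(0, ½, 1)`: at `θ₀ = π/4` the QPFI equals 4 while the
unitary-preprocessing-optimized Fisher information is strictly smaller than 4. -/
theorem stmt16
    (ζ : ℝ → Matrix (Fin 3) (Fin 3) ℂ)
    (hζ : ∀ θ, ζ θ = Matrix.diagonal
      ![(((Real.cos θ) ^ 2 : ℝ) : ℂ), ((((Real.sin θ) ^ 2) / 2 : ℝ) : ℂ),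
        ((((Real.sin θ) ^ 2) / 2 : ℝ) : ℂ)])
    (ζ' : Matrix (Fin 3) (Fin 3) ℂ)
    (hζ' : ∀ i j, HasDerivAt (fun θ => ζ θ i j) (ζ' i j) (Real.pi / 4))
    (M : Fin 2 → Matrix (Fin 3) (Fin 3) ℂ)
    (hM0 : M 0 = Matrix.diagonal ![(1 : ℂ), (1 / 2 : ℂ), (0 : ℂ)])
    (hM1 : M 1 = Matrix.diagonal ![(0 : ℂ), (1 / 2 : ℂ), (1 : ℂ)]) :
    QPFI (ζ (Real.pi / 4)) ζ' M = 4 ∧ QUPFI (ζ (Real.pi / 4)) ζ' M < 4 := by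
  have hζ_eigs : ζ = fun θ => diagonal fun k => (eigs θ k : ℂ) := by
    funext θ
    rw [hζ]
    congr 1
    funext k
    fin_cases k <;> rfl
  have hζ₀ : ζ (Real.pi / 4) = diagonal fun k => (lam₀ k : ℂ) := by
    simp only [hζ_eigs, eigs_pi_div_four]
  have hζ₀' : ζ' = diagonal fun k => (lam₀' k : ℂ) :=
    eq_diagonal_of_hasDerivAt hasDerivAt_eigs (by simpa only [hζ_eigs] using hζ')
  have hM : IsPOVM M := isPOVM_of_eq_diagonal hM0 hM1
  rw [hζ₀, hζ₀']
  exact ⟨qpfi_lam₀_eq_four hM hM0 hM1,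
    qupfi_lam₀_lt_four hM (by norm_num [hM0, trace, Fin.sum_univ_three, cons_val_two])⟩
end
end

section
/- Fix integers D, d, r ≥ 1, a differentiable state family ρ at θ₀ on ℂ^D, and a POVM M on ℂ^d with r outcomes such that every Mᵢ is positive definite (its minimum eigenvalue is strictly positive). Then the supremum defining F^P(ρ₀, ρ₀', M) is attained: there exists a quantum channel ℰ from D×D to d×d complex matrices with F(ℰ(ρ₀), ℰ(ρ₀'), M) = F^P(ρ₀, ρ₀', M). Likewise, if D = d, there exists a d×d unitary matrix U with F(Uρ₀U*, Uρ₀'U*, M) = F^U(ρ₀, ρ₀', M). -/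
open scoped Matrix Kronecker ComplexOrder
open Classical

noncomputable section

lemma stmt18.kraus_isCompact {ι : Type*} [Fintype ι] {D d : ℕ} :
    IsCompact {K : ι → Matrix (Fin d) (Fin D) ℂ | ∑ j, (K j)ᴴ * K j = 1} := by
  have hC : IsCompact {K : ι → Matrix (Fin d) (Fin D) ℂ |
      ∀ j a b, K j a b ∈ Metric.closedBall (0:ℂ) 1} := by
    have he : {K : ι → Matrix (Fin d) (Fin D) ℂ | ∀ j a b, K j a b ∈ Metric.closedBall (0:ℂ) 1}
        = Set.pi Set.univ (fun _ : ι => (Set.pi Set.univ (fun _ : Fin d =>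
            Set.pi Set.univ (fun _ : Fin D => Metric.closedBall (0:ℂ) 1)) :
              Set (Matrix (Fin d) (Fin D) ℂ))) := by
      ext K; simp [Set.mem_pi]
      exact ⟨fun h j _ a _ b _ => by simpa using h j a b, fun h j a b => by simpa using h j (Set.mem_univ _) a (Set.mem_univ _) b (Set.mem_univ _)⟩
    rw [he]
    exact isCompact_univ_pi fun _ => isCompact_univ_pi fun _ => isCompact_univ_pi fun _ =>
      isCompact_closedBall _ _
  refine IsCompact.of_isClosed_subset hC ?_ ?_
  · have hcont : Continuous fun K : ι → Matrix (Fin d) (Fin D) ℂ => ∑ j, (K j)ᴴ * K j :=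
      continuous_finset_sum _ fun j _ => ((continuous_apply j).matrix_conjTranspose).matrix_mul
        (continuous_apply j)
    exact isClosed_eq hcont continuous_const
  · intro K hK
    simp only [Set.mem_setOf_eq] at hK ⊢
    intro j a b
    have h1 : (∑ j, (K j)ᴴ * K j) b b = 1 := by rw [hK]; simp [Matrix.one_apply]
    have h2 : ∑ j, ∑ a, Complex.normSq (K j a b) = 1 := by
      have := congrArg Complex.re h1
      simpa [Matrix.sum_apply, Matrix.mul_apply, Matrix.conjTranspose_apply, Complex.re_sum,
        mul_comm, Complex.mul_conj] using this
    have h3 : Complex.normSq (K j a b) ≤ 1 := by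
      calc Complex.normSq (K j a b) ≤ ∑ a', Complex.normSq (K j a' b) :=
            Finset.single_le_sum (f := fun a' => Complex.normSq (K j a' b))
              (fun _ _ => Complex.normSq_nonneg _) (Finset.mem_univ a)
        _ ≤ ∑ j', ∑ a', Complex.normSq (K j' a' b) :=
            Finset.single_le_sum (f := fun j' => ∑ a', Complex.normSq (K j' a' b))
              (fun _ _ => Finset.sum_nonneg fun _ _ => Complex.normSq_nonneg _)
              (Finset.mem_univ j)
        _ = 1 := h2
    have h4 : ‖K j a b‖ ≤ 1 := by
      have := Complex.sq_norm (K j a b)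
      nlinarith [norm_nonneg (K j a b)]
    simpa [Complex.dist_eq] using h4

lemma stmt18.trace_re_pos {n : Type*} [Fintype n] [DecidableEq n]
    {σ N : Matrix n n ℂ} (hσ : σ.PosSemidef) (hσt : σ.trace = 1) (hN : N.PosDef) :
    0 < (σ * N).trace.re := by
  open scoped MatrixOrder in
  set S := CFC.sqrt σ with hSdef
  open scoped MatrixOrder in
  have hSS : S * S = σ := CFC.sqrt_mul_sqrt_self σ hσ.nonneg
  open scoped MatrixOrder in
  have hSh : S.IsHermitian := (Matrix.nonneg_iff_posSemidef.mp (CFC.sqrt_nonneg σ)).1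
  have htr : (σ * N).trace = (S * N * S).trace := by
    rw [← hSS, mul_assoc, Matrix.trace_mul_comm]
  have hdiag : ∀ k, (S * N * S) k k = star (fun p => S p k) ⬝ᵥ N *ᵥ (fun p => S p k) := by
    intro k
    simp only [Matrix.mul_apply, dotProduct, Matrix.mulVec, Pi.star_apply,
      Finset.sum_mul, Finset.mul_sum]
    rw [Finset.sum_comm]
    refine Finset.sum_congr rfl fun p _ => Finset.sum_congr rfl fun q _ => ?_
    rw [← hSh.apply k p]
    ring
  have hS0 : S ≠ 0 := by
    intro h
    rw [← hSS, h, mul_zero] at hσt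
    simp [Matrix.trace] at hσt
  obtain ⟨p0, k0, hpk⟩ : ∃ p k, S p k ≠ 0 := by
    by_contra h
    push_neg at h
    exact hS0 (by ext p k; simpa using h p k)
  have hre : (S * N * S).trace.re = ∑ k, ((S * N * S) k k).re := by
    simp [Matrix.trace, Matrix.diag, Complex.re_sum]
  rw [htr, hre]
  refine Finset.sum_pos' (fun k _ => ?_) ⟨k0, Finset.mem_univ _, ?_⟩
  · rw [hdiag k]; exact hN.posSemidef.re_dotProduct_nonneg _
  · rw [hdiag k0]
    exact hN.re_dotProduct_pos (by intro h; exact hpk (congrFun h p0))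

lemma stmt18.sum_rot {α β γ M : Type*} [Fintype α] [Fintype β] [Fintype γ] [AddCommMonoid M]
    (f : α → β → γ → M) :
    ∑ a, ∑ b, ∑ c, f a b c = ∑ c, ∑ b, ∑ a, f a b c := by
  calc ∑ a, ∑ b, ∑ c, f a b c = ∑ a, ∑ c, ∑ b, f a b c :=
        Finset.sum_congr rfl fun a _ => Finset.sum_comm
    _ = ∑ c, ∑ a, ∑ b, f a b c := Finset.sum_comm
    _ = ∑ c, ∑ b, ∑ a, f a b c := Finset.sum_congr rfl fun c _ => Finset.sum_comm

lemma stmt18.kraus_reduce {D d κ : ℕ} (K : Fin κ → Matrix (Fin d) (Fin D) ℂ)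
    (hK : ∑ j, (K j)ᴴ * K j = 1) :
    ∃ L : Fin d × Fin D → Matrix (Fin d) (Fin D) ℂ,
      (∑ k, (L k)ᴴ * L k = 1) ∧
      ∀ σ : Matrix (Fin D) (Fin D) ℂ, ∑ j, K j * σ * (K j)ᴴ = ∑ k, L k * σ * (L k)ᴴ := by
  set B : Matrix (Fin κ) (Fin d × Fin D) ℂ := Matrix.of (fun j q => star (K j q.1 q.2)) with hBdef
  set C : Matrix (Fin d × Fin D) (Fin d × Fin D) ℂ := Bᴴ * B with hCdef
  have hCapp : ∀ p q, C p q = ∑ j, K j p.1 p.2 * star (K j q.1 q.2) := by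
    intro p q
    simp [hCdef, Matrix.mul_apply, Matrix.conjTranspose_apply, hBdef]
  have hC : C.PosSemidef := Matrix.posSemidef_conjTranspose_mul_self B
  open scoped MatrixOrder in
  set S := CFC.sqrt C with hSdef
  open scoped MatrixOrder in
  have hSS : S * S = C := CFC.sqrt_mul_sqrt_self C hC.nonneg
  open scoped MatrixOrder in
  have hSh : S.IsHermitian := (Matrix.nonneg_iff_posSemidef.mp (CFC.sqrt_nonneg C)).1
  have key : ∀ p q, ∑ k, star (S k p) * S k q = C p q := by
    intro p q
    rw [← hSS, Matrix.mul_apply]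
    exact Finset.sum_congr rfl fun k _ => by rw [hSh.apply p k]
  set L : Fin d × Fin D → Matrix (Fin d) (Fin D) ℂ :=
    fun k => Matrix.of (fun a x => star (S k (a, x))) with hLdef
  have hLapp : ∀ k a x, L k a x = star (S k (a, x)) := fun _ _ _ => rfl
  refine ⟨L, ?_, ?_⟩
  · ext x y
    have e1 : (∑ k, (L k)ᴴ * L k) x y = ∑ k, ∑ a, S k (a, x) * star (S k (a, y)) := by
      simp [Matrix.sum_apply, Matrix.mul_apply, Matrix.conjTranspose_apply, hLapp, star_star]
    have e2 : (1 : Matrix (Fin D) (Fin D) ℂ) x y = ∑ a, ∑ j, star (K j a x) * K j a y := by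
      rw [← hK]
      simp only [Matrix.sum_apply, Matrix.mul_apply, Matrix.conjTranspose_apply]
      rw [Finset.sum_comm]
    rw [e1, e2, Finset.sum_comm]
    refine Finset.sum_congr rfl fun a _ => ?_
    calc ∑ k, S k (a, x) * star (S k (a, y))
        = star (∑ k, star (S k (a, x)) * S k (a, y)) := by
          simp only [star_sum, star_mul', star_star]
      _ = star (C (a, x) (a, y)) := by rw [key]
      _ = ∑ j, star (K j a x) * K j a y := by
          rw [hCapp]
          simp only [star_sum, star_mul', star_star]
  · intro σ
    ext a b
    have e1 : (∑ j, K j * σ * (K j)ᴴ) a b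
        = ∑ x, ∑ y, ∑ j, K j a x * σ x y * star (K j b y) := by
      simp only [Matrix.sum_apply, Matrix.mul_apply, Matrix.conjTranspose_apply, Finset.sum_mul]
      exact stmt18.sum_rot _
    have e2 : (∑ k, L k * σ * (L k)ᴴ) a b
        = ∑ x, ∑ y, ∑ k, star (S k (a, x)) * σ x y * S k (b, y) := by
      simp only [Matrix.sum_apply, Matrix.mul_apply, Matrix.conjTranspose_apply, hLdef,
        Matrix.of_apply, star_star, Finset.sum_mul]
      exact stmt18.sum_rot _
    rw [e1, e2]
    refine Finset.sum_congr rfl fun x _ => Finset.sum_congr rfl fun y _ => ?_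
    calc ∑ j, K j a x * σ x y * star (K j b y) = σ x y * C (a, x) (b, y) := by
          rw [hCapp, Finset.mul_sum]
          exact Finset.sum_congr rfl fun j _ => by ring
      _ = σ x y * ∑ k, star (S k (a, x)) * S k (b, y) := by rw [key]
      _ = ∑ k, star (S k (a, x)) * σ x y * S k (b, y) := by
          rw [Finset.mul_sum]
          exact Finset.sum_congr rfl fun k _ => by ring

lemma stmt18.channel_psd {ι m n : Type*} [Fintype ι] [Fintype m] [Fintype n]
    {σ : Matrix m m ℂ} (hσ : σ.PosSemidef) (K : ι → Matrix n m ℂ) :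
    (∑ j, K j * σ * (K j)ᴴ).PosSemidef := by
  refine Finset.sum_induction _ _ (fun A B hA hB => hA.add hB) Matrix.PosSemidef.zero
    (fun j _ => hσ.mul_mul_conjTranspose_same (K j))

lemma stmt18.channel_trace {ι m n : Type*} [Fintype ι] [Fintype m] [Fintype n] [DecidableEq m]
    (K : ι → Matrix n m ℂ) (hK : ∑ j, (K j)ᴴ * K j = 1) (σ : Matrix m m ℂ) :
    (∑ j, K j * σ * (K j)ᴴ).trace = σ.trace := by
  rw [Matrix.trace_sum]
  calc ∑ j, (K j * σ * (K j)ᴴ).trace = ∑ j, ((K j)ᴴ * K j * σ).trace :=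
        Finset.sum_congr rfl fun j _ => Matrix.trace_mul_cycle (K j) σ ((K j)ᴴ)
    _ = ((∑ j, (K j)ᴴ * K j) * σ).trace := by rw [Finset.sum_mul, Matrix.trace_sum]
    _ = σ.trace := by rw [hK, one_mul]

lemma stmt18.kraus_nonempty {D d : ℕ} (hD : 1 ≤ D) (hd : 1 ≤ d) :
    ∃ K : Fin d × Fin D → Matrix (Fin d) (Fin D) ℂ, ∑ j, (K j)ᴴ * K j = 1 := by
  set i0 : Fin d := ⟨0, hd⟩
  refine ⟨fun p => Matrix.of (fun a z => if a = i0 ∧ p.1 = i0 ∧ z = p.2 then 1 else 0), ?_⟩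
  ext x y
  simp only [Matrix.sum_apply, Matrix.mul_apply, Matrix.conjTranspose_apply, Matrix.of_apply,
    Fintype.sum_prod_type]
  simp [apply_ite, ite_and, mul_ite, ite_mul, one_mul, mul_one, mul_zero, zero_mul,
    Finset.sum_ite_eq, Finset.sum_ite_eq', Matrix.one_apply, eq_comm]

/-- for a POVM all of whose elements are positive definite, the suprema
defining the QPFI and (when `D = d`) the QUPFI are attained. -/
theorem stmt18 {D d r : ℕ} (hD : 1 ≤ D) (hd : 1 ≤ d) (hr : 1 ≤ r)
    (ρ : ℝ → Matrix (Fin D) (Fin D) ℂ) (ρ' : Matrix (Fin D) (Fin D) ℂ) (θ₀ : ℝ)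
    (hdens : ∀ θ, IsDensityMatrix (ρ θ))
    (hder : ∀ i j, HasDerivAt (fun θ => ρ θ i j) (ρ' i j) θ₀)
    (M : Fin r → Matrix (Fin d) (Fin d) ℂ) (hM : IsPOVM M)
    (hMpd : ∀ i, (M i).PosDef) :
    (∃ E : Matrix (Fin D) (Fin D) ℂ → Matrix (Fin d) (Fin d) ℂ,
      IsQuantumChannel E ∧ FisherInfo (E (ρ θ₀)) (E ρ') M = QPFI (ρ θ₀) ρ' M)
    ∧ ∀ (h : D = d),
        ∃ U : Matrix (Fin d) (Fin d) ℂ, U ∈ Matrix.unitaryGroup (Fin d) ℂ ∧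
          FisherInfo
              (U * Matrix.reindex (finCongr h) (finCongr h) (ρ θ₀) * Uᴴ)
              (U * Matrix.reindex (finCongr h) (finCongr h) ρ' * Uᴴ) M
            = QUPFI (Matrix.reindex (finCongr h) (finCongr h) (ρ θ₀))
                (Matrix.reindex (finCongr h) (finCongr h) ρ') M := by
  obtain ⟨hρpsd, hρtr⟩ := hdens θ₀
  constructor
  · -- channel part
    set T : Set (Fin d × Fin D → Matrix (Fin d) (Fin D) ℂ) :=
      {K | ∑ j, (K j)ᴴ * K j = 1} with hTdef
    have hTc : IsCompact T := stmt18.kraus_isCompact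
    obtain ⟨K0, hK0⟩ := stmt18.kraus_nonempty hD hd
    have hTne : T.Nonempty := ⟨K0, hK0⟩
    set g : (Fin d × Fin D → Matrix (Fin d) (Fin D) ℂ) → ℝ := fun K =>
      FisherInfo (∑ j, K j * ρ θ₀ * (K j)ᴴ) (∑ j, K j * ρ' * (K j)ᴴ) M with hgdef
    have hden : ∀ K ∈ T, ∀ i, 0 < ((∑ j, K j * ρ θ₀ * (K j)ᴴ) * M i).trace.re := by
      intro K hK i
      exact stmt18.trace_re_pos (stmt18.channel_psd hρpsd K)
        (by rw [stmt18.channel_trace K hK, hρtr]) (hMpd i)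
    have hne0 : ∀ K ∈ T, ∀ i, ((∑ j, K j * ρ θ₀ * (K j)ᴴ) * M i).trace ≠ 0 := by
      intro K hK i h
      have h2 := hden K hK i
      rw [h] at h2
      simp at h2
    have hgc : ContinuousOn g T := by
      have hcont : ∀ (A : Matrix (Fin D) (Fin D) ℂ) (i : Fin r),
          Continuous fun K : Fin d × Fin D → Matrix (Fin d) (Fin D) ℂ =>
            ((∑ j, K j * A * (K j)ᴴ) * M i).trace.re := by
        intro A i
        refine Complex.continuous_re.comp (Continuous.matrix_trace ?_)
        refine Continuous.matrix_mul ?_ continuous_const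
        exact continuous_finset_sum _ fun j _ =>
          (((continuous_apply j).matrix_mul continuous_const).matrix_mul
            ((continuous_apply j).matrix_conjTranspose))
      have h2 : ContinuousOn (fun K : Fin d × Fin D → Matrix (Fin d) (Fin D) ℂ =>
          ∑ i, (((∑ j, K j * ρ' * (K j)ᴴ) * M i).trace.re) ^ 2
            / ((∑ j, K j * ρ θ₀ * (K j)ᴴ) * M i).trace.re) T := by
        refine continuousOn_finset_sum _ fun i _ => ContinuousOn.div
          (((hcont ρ' i).pow 2).continuousOn) ((hcont (ρ θ₀) i).continuousOn)
          (fun K hK => (hden K hK i).ne')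
      refine ContinuousOn.congr h2 ?_
      intro K hK
      simp only [hgdef, FisherInfo]
      exact Finset.sum_congr rfl fun i _ => by rw [if_neg (hne0 K hK i)]
    obtain ⟨Kopt, hKoptT, hmax⟩ := hTc.exists_isMaxOn hTne hgc
    have hub : ∀ x ∈ {x : ℝ | ∃ E : Matrix (Fin D) (Fin D) ℂ → Matrix (Fin d) (Fin d) ℂ,
        IsQuantumChannel E ∧ x = FisherInfo (E (ρ θ₀)) (E ρ') M}, x ≤ g Kopt := by
      rintro x ⟨E, ⟨κ, K, hK1, hKE⟩, rfl⟩
      obtain ⟨L, hL1, hLE⟩ := stmt18.kraus_reduce K hK1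
      have hEL : FisherInfo (E (ρ θ₀)) (E ρ') M = g L := by
        rw [hKE (ρ θ₀), hKE ρ', hLE (ρ θ₀), hLE ρ']
      rw [hEL]
      exact hmax hL1
    refine ⟨fun σ => ∑ j, Kopt j * σ * (Kopt j)ᴴ, ⟨d * D,
      fun j => Kopt (finProdFinEquiv.symm j), ?_, ?_⟩, ?_⟩
    · rw [Equiv.sum_comp finProdFinEquiv.symm (fun p => (Kopt p)ᴴ * Kopt p)]
      exact hKoptT
    · intro σ
      rw [Equiv.sum_comp finProdFinEquiv.symm (fun p => Kopt p * σ * (Kopt p)ᴴ)]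
    · have hmem : g Kopt ∈ {x : ℝ | ∃ E : Matrix (Fin D) (Fin D) ℂ → Matrix (Fin d) (Fin d) ℂ,
          IsQuantumChannel E ∧ x = FisherInfo (E (ρ θ₀)) (E ρ') M} := by
        refine ⟨fun σ => ∑ j, Kopt j * σ * (Kopt j)ᴴ, ⟨d * D,
          fun j => Kopt (finProdFinEquiv.symm j), ?_, ?_⟩, rfl⟩
        · rw [Equiv.sum_comp finProdFinEquiv.symm (fun p => (Kopt p)ᴴ * Kopt p)]
          exact hKoptT
        · intro σ
          rw [Equiv.sum_comp finProdFinEquiv.symm (fun p => Kopt p * σ * (Kopt p)ᴴ)]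
      exact le_antisymm (le_csSup ⟨g Kopt, hub⟩ hmem) (csSup_le ⟨g Kopt, hmem⟩ hub)
  · -- unitary part
    intro h
    subst h
    simp only [finCongr_refl, Matrix.reindex_refl_refl]
    have hUc : IsCompact {U : Matrix (Fin D) (Fin D) ℂ | U ∈ Matrix.unitaryGroup (Fin D) ℂ} := by
      have h1 : IsCompact {K : Fin 1 → Matrix (Fin D) (Fin D) ℂ | ∑ j, (K j)ᴴ * K j = 1} :=
        stmt18.kraus_isCompact
      have h2 := h1.image (continuous_apply (0 : Fin 1))
      have heq : {U : Matrix (Fin D) (Fin D) ℂ | U ∈ Matrix.unitaryGroup (Fin D) ℂ}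
          = (fun K : Fin 1 → Matrix (Fin D) (Fin D) ℂ => K 0) ''
              {K | ∑ j, (K j)ᴴ * K j = 1} := by
        ext U
        simp only [Set.mem_setOf_eq, Set.mem_image]
        constructor
        · intro hU
          refine ⟨fun _ => U, ?_, rfl⟩
          simp only [Set.mem_setOf_eq, Fin.sum_univ_one]
          rw [Matrix.mem_unitaryGroup_iff] at hU
          rw [← Matrix.star_eq_conjTranspose]
          exact mul_eq_one_comm.mp hU
        · rintro ⟨K, hK, rfl⟩
          rw [Matrix.mem_unitaryGroup_iff]
          simp only [Set.mem_setOf_eq, Fin.sum_univ_one] at hK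
          rw [← Matrix.star_eq_conjTranspose] at hK
          exact mul_eq_one_comm.mp hK
      rw [heq]
      exact h2
    have hUne : ({U : Matrix (Fin D) (Fin D) ℂ | U ∈ Matrix.unitaryGroup (Fin D) ℂ}).Nonempty :=
      ⟨1, show (1 : Matrix (Fin D) (Fin D) ℂ) ∈ Matrix.unitaryGroup (Fin D) ℂ from one_mem _⟩
    set f : Matrix (Fin D) (Fin D) ℂ → ℝ := fun U =>
      FisherInfo (U * ρ θ₀ * Uᴴ) (U * ρ' * Uᴴ) M with hfdef
    have hden : ∀ U ∈ {U : Matrix (Fin D) (Fin D) ℂ | U ∈ Matrix.unitaryGroup (Fin D) ℂ},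
        ∀ i, 0 < ((U * ρ θ₀ * Uᴴ) * M i).trace.re := by
      intro U hU i
      simp only [Set.mem_setOf_eq, Matrix.mem_unitaryGroup_iff] at hU
      have hU1 : Uᴴ * U = 1 := by
        rw [← Matrix.star_eq_conjTranspose]
        exact mul_eq_one_comm.mp hU
      refine stmt18.trace_re_pos (hρpsd.mul_mul_conjTranspose_same U) ?_ (hMpd i)
      rw [Matrix.trace_mul_cycle U (ρ θ₀) Uᴴ, hU1, one_mul, hρtr]
    have hne0 : ∀ U ∈ {U : Matrix (Fin D) (Fin D) ℂ | U ∈ Matrix.unitaryGroup (Fin D) ℂ},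
        ∀ i, ((U * ρ θ₀ * Uᴴ) * M i).trace ≠ 0 := by
      intro U hU i h
      have h2 := hden U hU i
      rw [h] at h2
      simp at h2
    have hfc : ContinuousOn f {U : Matrix (Fin D) (Fin D) ℂ | U ∈ Matrix.unitaryGroup (Fin D) ℂ} := by
      have hcont : ∀ (A : Matrix (Fin D) (Fin D) ℂ) (i : Fin r),
          Continuous fun U : Matrix (Fin D) (Fin D) ℂ => ((U * A * Uᴴ) * M i).trace.re := by
        intro A i
        refine Complex.continuous_re.comp (Continuous.matrix_trace ?_)
        exact ((continuous_id.matrix_mul continuous_const).matrix_mul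
          continuous_id.matrix_conjTranspose).matrix_mul continuous_const
      have h2 : ContinuousOn (fun U : Matrix (Fin D) (Fin D) ℂ =>
          ∑ i, (((U * ρ' * Uᴴ) * M i).trace.re) ^ 2 / ((U * ρ θ₀ * Uᴴ) * M i).trace.re)
          {U : Matrix (Fin D) (Fin D) ℂ | U ∈ Matrix.unitaryGroup (Fin D) ℂ} := by
        refine continuousOn_finset_sum _ fun i _ => ContinuousOn.div
          (((hcont ρ' i).pow 2).continuousOn) ((hcont (ρ θ₀) i).continuousOn)
          (fun U hU => (hden U hU i).ne')
      refine ContinuousOn.congr h2 ?_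
      intro U hU
      simp only [hfdef, FisherInfo]
      exact Finset.sum_congr rfl fun i _ => by rw [if_neg (hne0 U hU i)]
    obtain ⟨Uopt, hUoptm, hmax⟩ := hUc.exists_isMaxOn hUne hfc
    have hub : ∀ x ∈ {x : ℝ | ∃ U : Matrix (Fin D) (Fin D) ℂ,
        U ∈ Matrix.unitaryGroup (Fin D) ℂ ∧
        x = FisherInfo (U * ρ θ₀ * Uᴴ) (U * ρ' * Uᴴ) M}, x ≤ f Uopt := by
      rintro x ⟨U, hU, rfl⟩
      exact hmax hU
    have hmem : f Uopt ∈ {x : ℝ | ∃ U : Matrix (Fin D) (Fin D) ℂ,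
        U ∈ Matrix.unitaryGroup (Fin D) ℂ ∧
        x = FisherInfo (U * ρ θ₀ * Uᴴ) (U * ρ' * Uᴴ) M} := ⟨Uopt, hUoptm, rfl⟩
    exact ⟨Uopt, hUoptm,
      le_antisymm (le_csSup ⟨f Uopt, hub⟩ hmem) (csSup_le ⟨f Uopt, hmem⟩ hub)⟩
end
end

section
/- Fix D ≥ 2. Let λ ∈ ℝ^D with λᵢ > 0 and Σᵢ λᵢ = 1, and λ' ∈ ℝ^D with Σᵢ λ'ᵢ = 0, ordered so that λ'₁/λ₁ ≥ λ'₂/λ₂ ≥ … ≥ λ'_D/λ_D. Let 0 < m₂ < m₁ < 1. For t ∈ [0,1]^D define p(t) = m₂ + (m₁−m₂)·⟨t, λ⟩, p'(t) = (m₁−m₂)·⟨t, λ'⟩, and f(t) = p'(t)² / (p(t)(1−p(t))) (the classical Fisher information of the binary distribution (p(t), 1−p(t)) with derivative (p'(t), −p'(t)); note p(t) ∈ [m₂, m₁] ⊂ (0,1)). Then the supremum of f over t ∈ [0,1]^D equals the maximum over 1 ≤ i ≤ D−1 of max{f(𝟙_{≤i}), f(𝟙_{≥i+1})}, where 𝟙_{≤i}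 ∈ {0,1}^D has its first i entries equal to 1 and the rest 0, and 𝟙_{≥i+1} = 𝟙 − 𝟙_{≤i}. -/
open scoped Matrix Kronecker ComplexOrder
open Classical

noncomputable section

/-!
The Fisher information `f t` depends on `t` only through the point `(t ⬝ᵥ λ, t ⬝ᵥ λ')`, and
`(p, y) ↦ y² / (p (1 - p)) = y² / p + y² / (1 - p)` is jointly convex, so `f` is convex on the
cube. For fixed mass `s = t ⬝ᵥ λ`, the Neyman–Pearson argument shows that `t ⬝ᵥ λ'` is bounded
above by its value at the fractional threshold vector `𝟙_{<k} + θ eₖ` of mass `s`, and below by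
its value at the fractional suffix vector of mass `s`. Since `f` grows with `|t ⬝ᵥ λ'|` at fixed
mass, `f t` is bounded by `f` at one of these fractional vectors, which lies on a segment between
two consecutive threshold vectors; convexity bounds it by `f` at one of its endpoints.
-/

open Set

-- The Fisher information `y² / p + y² / (1 - p)` of the outcome distribution `(p, 1 - p)` with
-- derivative `(y, -y)`.
def binaryFisher (p y : ℝ) : ℝ := y ^ 2 / (p * (1 - p))

theorem convexOn_sq_div : ConvexOn ℝ {q : ℝ × ℝ | 0 < q.1} fun q => q.2 ^ 2 / q.1 := by
  have hconv : Convex ℝ {q : ℝ × ℝ | 0 < q.1} :=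
    (convex_Ioi 0).linear_preimage (LinearMap.fst ℝ ℝ ℝ)
  refine ⟨hconv, ?_⟩
  rintro ⟨x₀, y₀⟩ hx₀ ⟨x₁, y₁⟩ hx₁ a b ha hb hab
  have hx : 0 < a * x₀ + b * x₁ := by simpa using hconv hx₀ hx₁ ha hb hab
  simp only [mem_ofPred_eq] at hx₀ hx₁
  simp only [Prod.smul_mk, Prod.mk_add_mk, smul_eq_mul]
  rw [div_le_iff₀ hx]
  obtain rfl : b = 1 - a := by linarith
  have hgap : (a * (y₀ ^ 2 / x₀) + (1 - a) * (y₁ ^ 2 / x₁)) * (a * x₀ + (1 - a) * x₁)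
      - (a * y₀ + (1 - a) * y₁) ^ 2 = a * (1 - a) * (y₀ * x₁ - y₁ * x₀) ^ 2 / (x₀ * x₁) := by
    field_simp
    ring
  have : 0 ≤ a * (1 - a) * (y₀ * x₁ - y₁ * x₀) ^ 2 / (x₀ * x₁) := by positivity
  linarith

theorem convexOn_binaryFisher :
    ConvexOn ℝ {q : ℝ × ℝ | q.1 ∈ Ioo 0 1} fun q => binaryFisher q.1 q.2 := by
  have hconv : Convex ℝ {q : ℝ × ℝ | q.1 ∈ Ioo 0 1} :=
    (convex_Ioo 0 1).linear_preimage (LinearMap.fst ℝ ℝ ℝ)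
  let reflect : ℝ × ℝ →ᵃ[ℝ] ℝ × ℝ :=
    (LinearMap.prodMap (-LinearMap.id) LinearMap.id).toAffineMap + AffineMap.const ℝ _ (1, 0)
  have h₀ := convexOn_sq_div.subset (fun q hq => hq.1) hconv
  have h₁ := (convexOn_sq_div.comp_affineMap reflect).subset
    (fun q hq => show 0 < -q.1 + 1 by linarith [hq.2]) hconv
  refine (h₀.add h₁).congr fun q hq => ?_
  have : q.1 ≠ 0 := hq.1.ne'
  have : 1 - q.1 ≠ 0 := by linarith [hq.2]
  have hreflect : reflect q = (1 - q.1, q.2) := by simp [reflect, neg_add_eq_sub]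
  simp only [Pi.add_apply, Function.comp_apply, hreflect, binaryFisher]
  field_simp
  ring

theorem binaryFisher_nonneg {p : ℝ} (y : ℝ) (hp : p ∈ Ioo 0 1) : 0 ≤ binaryFisher p y :=
  div_nonneg (sq_nonneg y) (mul_pos hp.1 (sub_pos.2 hp.2)).le

theorem binaryFisher_le_of_sq_le {p y z : ℝ} (hp : p ∈ Ioo 0 1) (h : y ^ 2 ≤ z ^ 2) :
    binaryFisher p y ≤ binaryFisher p z :=
  div_le_div_of_nonneg_right h (mul_pos hp.1 (sub_pos.2 hp.2)).le

theorem dotProduct_mem_Icc {ι : Type*} [Fintype ι] {t w : ι → ℝ} (ht : t ∈ Icc 0 1)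
    (hw : 0 ≤ w) : t ⬝ᵥ w ∈ Icc 0 (∑ i, w i) := by
  refine ⟨dotProduct_nonneg_of_nonneg ht.1 hw, ?_⟩
  calc t ⬝ᵥ w ≤ 1 ⬝ᵥ w := dotProduct_le_dotProduct_of_nonneg_right ht.2 hw
    _ = ∑ i, w i := one_dotProduct w

section NeymanPearson

variable {ι : Type*} [Fintype ι] [LinearOrder ι] {w v t τ : ι → ℝ}

theorem dotProduct_le_of_threshold (hw : ∀ i, 0 < w i) (hvw : Antitone fun i => v i / w i)
    (ht : t ∈ Icc 0 1) (k : ι) (hτ₁ : ∀ i < k, τ i = 1) (hτ₀ : ∀ i, k < i → τ i = 0)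
    (hτw : τ ⬝ᵥ w = t ⬝ᵥ w) : t ⬝ᵥ v ≤ τ ⬝ᵥ v := by
  set r := v k / w k
  -- Since `t` and `τ` have the same `w`-mass, the ratio `r` can be subtracted termwise.
  have hsplit : ∑ i, (t i - τ i) * (v i - r * w i)
      = t ⬝ᵥ v - τ ⬝ᵥ v - r * (t ⬝ᵥ w - τ ⬝ᵥ w) := by
    simp only [dotProduct, Finset.mul_sum, ← Finset.sum_sub_distrib]
    exact Finset.sum_congr rfl fun i _ => by ring
  have hterm : ∀ i, (t i - τ i) * (v i - r * w i) ≤ 0 := by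
    intro i
    rcases lt_trichotomy i k with hik | rfl | hki
    · have : r * w i ≤ v i := (le_div_iff₀ (hw i)).1 (hvw hik.le)
      rw [hτ₁ i hik]
      exact mul_nonpos_of_nonpos_of_nonneg (sub_nonpos.2 (ht.2 i)) (sub_nonneg.2 this)
    · simp [r, div_mul_cancel₀ _ (hw i).ne']
    · have : v i ≤ r * w i := (div_le_iff₀ (hw i)).1 (hvw hki.le)
      rw [hτ₀ i hki]
      exact mul_nonpos_of_nonneg_of_nonpos (sub_nonneg.2 (ht.1 i)) (sub_nonpos.2 this)
  have := Finset.sum_nonpos fun i (_ : i ∈ Finset.univ) => hterm i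
  rw [hsplit, hτw, sub_self, mul_zero, sub_zero] at this
  linarith

theorem le_dotProduct_of_threshold (hw : ∀ i, 0 < w i) (hvw : Antitone fun i => v i / w i)
    (ht : t ∈ Icc 0 1) (k : ι) (hτ₀ : ∀ i < k, τ i = 0) (hτ₁ : ∀ i, k < i → τ i = 1)
    (hτw : τ ⬝ᵥ w = t ⬝ᵥ w) : τ ⬝ᵥ v ≤ t ⬝ᵥ v := by
  have hflip := dotProduct_le_of_threshold (t := 1 - t) (τ := 1 - τ) hw hvw
    ⟨sub_nonneg.2 ht.2, sub_le_self 1 ht.1⟩ k (fun i hi => by simp [hτ₀ i hi])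
    (fun i hi => by simp [hτ₁ i hi]) (by simp only [sub_dotProduct, hτw])
  simp only [sub_dotProduct] at hflip
  linarith

end NeymanPearson

theorem exists_mem_uIcc_succ {α : Type*} [LinearOrder α] (g : ℕ → α) {s : α} {n : ℕ}
    (hn : 0 < n) (hs : s ∈ uIcc (g 0) (g n)) : ∃ k < n, s ∈ uIcc (g k) (g (k + 1)) := by
  induction n with
  | zero => exact absurd hn (lt_irrefl 0)
  | succ n ih =>
    rcases Nat.eq_zero_or_pos n with rfl | hn
    · exact ⟨0, Nat.one_pos, hs⟩
    rcases uIcc_subset_uIcc_union_uIcc hs with hs | hs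
    · obtain ⟨k, hk, hks⟩ := ih hn hs
      exact ⟨k, hk.trans (Nat.lt_succ_self n), hks⟩
    · exact ⟨n, Nat.lt_succ_self n, hs⟩

theorem exists_mem_segment_of_mem_uIcc {E : Type*} [AddCommGroup E] [Module ℝ E]
    (φ : E →ᵃ[ℝ] ℝ) (u : ℕ → E) {s : ℝ} {n : ℕ} (hn : 0 < n)
    (hs : s ∈ uIcc (φ (u 0)) (φ (u n))) :
    ∃ k < n, ∃ τ ∈ segment ℝ (u k) (u (k + 1)), φ τ = s := by
  obtain ⟨k, hk, hks⟩ := exists_mem_uIcc_succ (φ ∘ u) hn hs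
  rw [Function.comp_apply, Function.comp_apply, ← segment_eq_uIcc, ← image_segment] at hks
  obtain ⟨τ, hτ, rfl⟩ := hks
  exact ⟨k, hk, τ, hτ, rfl⟩

theorem apply_eq_of_mem_segment {ι : Type*} {u v τ : ι → ℝ} (hτ : τ ∈ segment ℝ u v) {i : ι}
    {c : ℝ} (hu : u i = c) (hv : v i = c) : τ i = c := by
  obtain ⟨a, b, -, -, hab, rfl⟩ := hτ
  simp [hu, hv, ← add_mul, hab]

section Preprocessing

variable {ι : Type*} [Fintype ι] {m₁ m₂ : ℝ} {lam lam' t : ι → ℝ}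

def preprocessedFisher (m₁ m₂ : ℝ) (lam lam' t : ι → ℝ) : ℝ :=
  binaryFisher (m₂ + (m₁ - m₂) * (t ⬝ᵥ lam)) ((m₁ - m₂) * (t ⬝ᵥ lam'))

theorem add_sub_mul_mem_Ioo (h₂ : 0 < m₂) (h₁₂ : m₂ < m₁) (h₁ : m₁ < 1) {s : ℝ}
    (hs : s ∈ Icc (0 : ℝ) 1) : m₂ + (m₁ - m₂) * s ∈ Ioo 0 1 := by
  constructor <;> nlinarith [hs.1, hs.2]

theorem preprocessedFisher_nonneg (h₂ : 0 < m₂) (h₁₂ : m₂ < m₁) (h₁ : m₁ < 1) (hlam : 0 ≤ lam)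
    (hsum : ∑ i, lam i = 1) (ht : t ∈ Icc 0 1) : 0 ≤ preprocessedFisher m₁ m₂ lam lam' t :=
  binaryFisher_nonneg _ (add_sub_mul_mem_Ioo h₂ h₁₂ h₁ (hsum ▸ dotProduct_mem_Icc ht hlam))

theorem preprocessedFisher_eq_zero (h : t ⬝ᵥ lam' = 0) :
    preprocessedFisher m₁ m₂ lam lam' t = 0 := by
  simp [preprocessedFisher, binaryFisher, h]

theorem convexOn_preprocessedFisher (h₂ : 0 < m₂) (h₁₂ : m₂ < m₁) (h₁ : m₁ < 1)
    (hlam : 0 ≤ lam) (hsum : ∑ i, lam i = 1) :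
    ConvexOn ℝ (Icc 0 1) (preprocessedFisher m₁ m₂ lam lam') := by
  refine ⟨convex_Icc 0 1, fun t ht u hu a b ha hb hab => ?_⟩
  have hmem : ∀ v ∈ Icc (0 : ι → ℝ) 1,
      (m₂ + (m₁ - m₂) * (v ⬝ᵥ lam), (m₁ - m₂) * (v ⬝ᵥ lam')) ∈ {q : ℝ × ℝ | q.1 ∈ Ioo 0 1} :=
    fun v hv => add_sub_mul_mem_Ioo h₂ h₁₂ h₁ (hsum ▸ dotProduct_mem_Icc hv hlam)
  refine le_of_eq_of_le ?_ (convexOn_binaryFisher.2 (hmem t ht) (hmem u hu) ha hb hab)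
  simp only [preprocessedFisher, add_dotProduct, smul_dotProduct, Prod.smul_mk, Prod.mk_add_mk,
    smul_eq_mul]
  congr 1
  · linear_combination (-m₂) * hab
  · ring

theorem preprocessedFisher_le_max_of_mem_segment (h₂ : 0 < m₂) (h₁₂ : m₂ < m₁) (h₁ : m₁ < 1)
    (hlam : 0 ≤ lam) (hsum : ∑ i, lam i = 1) {τ u v : ι → ℝ} (ht : t ∈ Icc 0 1)
    (hu : u ∈ Icc 0 1) (hv : v ∈ Icc 0 1) (hτ : τ ∈ segment ℝ u v)
    (hτlam : τ ⬝ᵥ lam = t ⬝ᵥ lam) (hsq : (t ⬝ᵥ lam') ^ 2 ≤ (τ ⬝ᵥ lam') ^ 2) :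
    preprocessedFisher m₁ m₂ lam lam' t
      ≤ max (preprocessedFisher m₁ m₂ lam lam' u) (preprocessedFisher m₁ m₂ lam lam' v) := by
  calc preprocessedFisher m₁ m₂ lam lam' t ≤ preprocessedFisher m₁ m₂ lam lam' τ := by
        rw [preprocessedFisher, preprocessedFisher, hτlam]
        exact binaryFisher_le_of_sq_le
          (add_sub_mul_mem_Ioo h₂ h₁₂ h₁ (hsum ▸ dotProduct_mem_Icc ht hlam))
          (by rw [mul_pow, mul_pow]; gcongr)
    _ ≤ _ := (convexOn_preprocessedFisher h₂ h₁₂ h₁ hlam hsum).le_on_segment hu hv hτ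

end Preprocessing

section Thresholds

variable {D : ℕ}

def prefixInd (D i : ℕ) : Fin D → ℝ := fun j => if (j : ℕ) < i then 1 else 0

def suffixInd (D i : ℕ) : Fin D → ℝ := fun j => if i ≤ (j : ℕ) then 1 else 0

theorem prefixInd_mem_Icc (i : ℕ) : prefixInd D i ∈ Icc 0 1 :=
  ⟨fun j => by unfold prefixInd; split_ifs <;> norm_num,
    fun j => by unfold prefixInd; split_ifs <;> norm_num⟩

theorem suffixInd_mem_Icc (i : ℕ) : suffixInd D i ∈ Icc 0 1 :=
  ⟨fun j => by unfold suffixInd; split_ifs <;> norm_num,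
    fun j => by unfold suffixInd; split_ifs <;> norm_num⟩

theorem prefixInd_zero : prefixInd D 0 = 0 := by ext j; simp [prefixInd]

theorem prefixInd_self : prefixInd D D = 1 := by ext j; simp [prefixInd]

theorem suffixInd_zero : suffixInd D 0 = 1 := by ext j; simp [suffixInd]

theorem suffixInd_self : suffixInd D D = 0 := by ext j; simp [suffixInd]

variable {m₁ m₂ : ℝ} {lam lam' t : Fin D → ℝ}

theorem exists_prefixInd_preprocessedFisher_ge (hD : 0 < D) (h₂ : 0 < m₂) (h₁₂ : m₂ < m₁)
    (h₁ : m₁ < 1) (hpos : ∀ i, 0 < lam i) (hsum : ∑ i, lam i = 1)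
    (hord : Antitone fun i => lam' i / lam i) (ht : t ∈ Icc 0 1) (hy : 0 ≤ t ⬝ᵥ lam') :
    ∃ k ≤ D, preprocessedFisher m₁ m₂ lam lam' t
      ≤ preprocessedFisher m₁ m₂ lam lam' (prefixInd D k) := by
  have hlam : 0 ≤ lam := fun i => (hpos i).le
  obtain ⟨k, hk, τ, hτ, hτlam⟩ := exists_mem_segment_of_mem_uIcc
    ((dotProductBilin ℝ ℝ).flip lam).toAffineMap (prefixInd D) hD (s := t ⬝ᵥ lam)
    (by simpa [prefixInd_zero, prefixInd_self, one_dotProduct, hsum] using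
      Icc_subset_uIcc (dotProduct_mem_Icc ht hlam))
  have hτ₁ : ∀ i < (⟨k, hk⟩ : Fin D), τ i = 1 := fun i hi =>
    apply_eq_of_mem_segment hτ (if_pos hi) (if_pos (Nat.lt_succ_of_lt hi))
  have hτ₀ : ∀ i, (⟨k, hk⟩ : Fin D) < i → τ i = 0 := fun i hi =>
    apply_eq_of_mem_segment hτ (if_neg (Fin.lt_def.1 hi).not_gt) (if_neg (Nat.not_lt.2 hi))
  have hNP := dotProduct_le_of_threshold hpos hord ht ⟨k, hk⟩ hτ₁ hτ₀ hτlam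
  rcases le_max_iff.1 (preprocessedFisher_le_max_of_mem_segment h₂ h₁₂ h₁ hlam hsum ht
    (prefixInd_mem_Icc k) (prefixInd_mem_Icc (k + 1)) hτ hτlam
    (pow_le_pow_left₀ hy hNP 2)) with h | h
  exacts [⟨k, hk.le, h⟩, ⟨k + 1, hk, h⟩]

theorem exists_suffixInd_preprocessedFisher_ge (hD : 0 < D) (h₂ : 0 < m₂) (h₁₂ : m₂ < m₁)
    (h₁ : m₁ < 1) (hpos : ∀ i, 0 < lam i) (hsum : ∑ i, lam i = 1)
    (hord : Antitone fun i => lam' i / lam i) (ht : t ∈ Icc 0 1) (hy : t ⬝ᵥ lam' ≤ 0) :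
    ∃ k ≤ D, preprocessedFisher m₁ m₂ lam lam' t
      ≤ preprocessedFisher m₁ m₂ lam lam' (suffixInd D k) := by
  have hlam : 0 ≤ lam := fun i => (hpos i).le
  obtain ⟨k, hk, τ, hτ, hτlam⟩ := exists_mem_segment_of_mem_uIcc
    ((dotProductBilin ℝ ℝ).flip lam).toAffineMap (suffixInd D) hD (s := t ⬝ᵥ lam)
    (by simpa [suffixInd_zero, suffixInd_self, one_dotProduct, hsum] using
      Icc_subset_uIcc' (dotProduct_mem_Icc ht hlam))
  have hτ₀ : ∀ i < (⟨k, hk⟩ : Fin D), τ i = 0 := fun i hi =>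
    apply_eq_of_mem_segment hτ (if_neg (Nat.not_le.2 hi))
      (if_neg (Nat.not_le.2 (Nat.lt_succ_of_lt hi)))
  have hτ₁ : ∀ i, (⟨k, hk⟩ : Fin D) < i → τ i = 1 := fun i hi =>
    apply_eq_of_mem_segment hτ (if_pos (Fin.lt_def.1 hi).le) (if_pos (Fin.lt_def.1 hi))
  have hNP := le_dotProduct_of_threshold hpos hord ht ⟨k, hk⟩ hτ₀ hτ₁ hτlam
  rcases le_max_iff.1 (preprocessedFisher_le_max_of_mem_segment h₂ h₁₂ h₁ hlam hsum ht
    (suffixInd_mem_Icc k) (suffixInd_mem_Icc (k + 1)) hτ hτlam (by nlinarith)) with h | h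
  exacts [⟨k, hk.le, h⟩, ⟨k + 1, hk, h⟩]

theorem exists_threshold_preprocessedFisher_ge (hD : 0 < D) (h₂ : 0 < m₂) (h₁₂ : m₂ < m₁)
    (h₁ : m₁ < 1) (hpos : ∀ i, 0 < lam i) (hsum : ∑ i, lam i = 1)
    (hord : Antitone fun i => lam' i / lam i) (ht : t ∈ Icc 0 1) :
    ∃ k ≤ D,
      preprocessedFisher m₁ m₂ lam lam' t ≤ preprocessedFisher m₁ m₂ lam lam' (prefixInd D k) ∨
      preprocessedFisher m₁ m₂ lam lam' t ≤ preprocessedFisher m₁ m₂ lam lam' (suffixInd D k) := by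
  rcases le_total 0 (t ⬝ᵥ lam') with hy | hy
  · obtain ⟨k, hk, h⟩ :=
      exists_prefixInd_preprocessedFisher_ge hD h₂ h₁₂ h₁ hpos hsum hord ht hy
    exact ⟨k, hk, .inl h⟩
  · obtain ⟨k, hk, h⟩ :=
      exists_suffixInd_preprocessedFisher_ge hD h₂ h₁₂ h₁ hpos hsum hord ht hy
    exact ⟨k, hk, .inr h⟩

theorem exists_interior_threshold_preprocessedFisher_ge (hD : 2 ≤ D) (h₂ : 0 < m₂)
    (h₁₂ : m₂ < m₁) (h₁ : m₁ < 1) (hpos : ∀ i, 0 < lam i) (hsum : ∑ i, lam i = 1)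
    (hsum' : ∑ i, lam' i = 0) (hord : Antitone fun i => lam' i / lam i) (ht : t ∈ Icc 0 1) :
    ∃ i, 1 ≤ i ∧ i ≤ D - 1 ∧
      (preprocessedFisher m₁ m₂ lam lam' t ≤ preprocessedFisher m₁ m₂ lam lam' (prefixInd D i) ∨
        preprocessedFisher m₁ m₂ lam lam' t
          ≤ preprocessedFisher m₁ m₂ lam lam' (suffixInd D i)) := by
  obtain ⟨k, hk, h⟩ :=
    exists_threshold_preprocessedFisher_ge (by omega) h₂ h₁₂ h₁ hpos hsum hord ht
  by_cases hk' : 1 ≤ k ∧ k ≤ D - 1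
  · exact ⟨k, hk'.1, hk'.2, h⟩
  -- The other thresholds are the constant vectors `0` and `1`, where the Fisher information
  -- vanishes.
  refine ⟨1, le_rfl, by omega, .inl ?_⟩
  have hends : ∀ u ∈ ({0, 1} : Set (Fin D → ℝ)), preprocessedFisher m₁ m₂ lam lam' u = 0 := by
    rintro u (rfl | rfl)
    exacts [preprocessedFisher_eq_zero (zero_dotProduct lam'),
      preprocessedFisher_eq_zero ((one_dotProduct lam').trans hsum')]
  have hk₀ : prefixInd D k ∈ ({0, 1} : Set _) ∧ suffixInd D k ∈ ({0, 1} : Set _) := by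
    obtain rfl | rfl : k = 0 ∨ k = D := by omega
    exacts [⟨.inl prefixInd_zero, .inr suffixInd_zero⟩, ⟨.inr prefixInd_self, .inl suffixInd_self⟩]
  rw [hends _ hk₀.1, hends _ hk₀.2, or_self] at h
  exact h.trans <|
    preprocessedFisher_nonneg h₂ h₁₂ h₁ (fun i => (hpos i).le) hsum (prefixInd_mem_Icc 1)

end Thresholds

/-- for a binary qubit measurement applied to a classically mixed state with
likelihood-ratio-ordered eigenvalues, the supremum of the Fisher information over
preprocessing vectors `t ∈ [0,1]^D` equals its maximum over the threshold vectors
`𝟙_{≤i}` and `𝟙_{≥i+1}` for `1 ≤ i ≤ D−1`. -/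
theorem stmt19 {D : ℕ} (hD : 2 ≤ D)
    (lam : Fin D → ℝ) (hpos : ∀ i, 0 < lam i) (hlsum : ∑ i, lam i = 1)
    (lam' : Fin D → ℝ) (hl'sum : ∑ i, lam' i = 0)
    (hord : ∀ i j : Fin D, i ≤ j → lam' j / lam j ≤ lam' i / lam i)
    (m₁ m₂ : ℝ) (h₂ : 0 < m₂) (h₁₂ : m₂ < m₁) (h₁ : m₁ < 1)
    (f : (Fin D → ℝ) → ℝ)
    (hf : ∀ t, f t = ((m₁ - m₂) * (t ⬝ᵥ lam')) ^ 2 /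
      ((m₂ + (m₁ - m₂) * (t ⬝ᵥ lam)) * (1 - (m₂ + (m₁ - m₂) * (t ⬝ᵥ lam))))) :
    sSup {x : ℝ | ∃ t : Fin D → ℝ, (∀ i, t i ∈ Set.Icc (0 : ℝ) 1) ∧ x = f t}
      = sSup {x : ℝ | ∃ i : ℕ, 1 ≤ i ∧ i ≤ D - 1 ∧
          (x = f (fun j => if (j : ℕ) < i then 1 else 0) ∨
           x = f (fun j => if i ≤ (j : ℕ) then 1 else 0))} := by
  obtain rfl : f = preprocessedFisher m₁ m₂ lam lam' := funext hf
  apply csSup_eq_csSup_of_forall_exists_le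
  · rintro _ ⟨t, ht, rfl⟩
    obtain ⟨i, hi₁, hi₂, h | h⟩ := exists_interior_threshold_preprocessedFisher_ge hD h₂ h₁₂ h₁
      hpos hlsum hl'sum hord (t := t) ⟨fun j => (ht j).1, fun j => (ht j).2⟩
    exacts [⟨_, ⟨i, hi₁, hi₂, .inl rfl⟩, h⟩, ⟨_, ⟨i, hi₁, hi₂, .inr rfl⟩, h⟩]
  · rintro _ ⟨i, -, -, rfl | rfl⟩
    exacts [⟨_, ⟨_, fun j => ⟨(prefixInd_mem_Icc i).1 j, (prefixInd_mem_Icc i).2 j⟩, rfl⟩, le_rfl⟩,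
      ⟨_, ⟨_, fun j => ⟨(suffixInd_mem_Icc i).1 j, (suffixInd_mem_Icc i).2 j⟩, rfl⟩, le_rfl⟩]
end
end
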